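/- Let (Σ,P) be a Kelvin–Planck theory with set T_CD of Clausius–Duhem temperature scales, let Σ⁰ ⊆ Σ, and let T⁰_CD be the set of restrictions of members of T_CD to Σ⁰. The following are equivalent: (i) all members of T⁰_CD are positive multiples of some fixed one; (ii) for each pair of distinct states σ', σ ∈ Σ⁰ there is a Carnot element of (Σ,P) operating between them. -/

import Mathlib

open Set

noncomputable section

/-- Signed regular Borel measures on `X`, modeled via the Riesz representation
theorem as the weak-star dual of `C(X, ℝ)`. -/
abbrev Meas (X : Type*) [TopologicalSpace X] := WeakDual ℝ C(X, ℝ)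

/-- The ambient space containing `V(X) = M°(X) ⊕ M(X)`; membership in the
subspace `M°(X)` of the first component is expressed by `p.1 1 = 0`. -/
abbrev VSp (X : Type*) [TopologicalSpace X] := Meas X × Meas X

/-- The cone of nonnegative measures. -/
def PosMeas (X : Type*) [TopologicalSpace X] : Set (Meas X) :=
  {μ | ∀ f : C(X, ℝ), (∀ x, 0 ≤ f x) → 0 ≤ μ f}

variable {X : Type*} [TopologicalSpace X]

/-- The Dirac measure at a point, i.e. the evaluation functional. -/
def dirac (x : X) : Meas X :=
  (⟨⟨⟨fun f => f x, fun _ _ => rfl⟩, fun _ _ => rfl⟩,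
    continuous_eval_const x⟩ : C(X, ℝ) →L[ℝ] ℝ)

/-- The set of nonnegative multiples of members of `P`. -/
def coneOf (P : Set (VSp X)) : Set (VSp X) :=
  {x | ∃ c : ℝ, 0 ≤ c ∧ ∃ p ∈ P, x = c • p}

/-- `\hat P`, the weak-star closure of the cone generated by `P`. -/
def hatP (P : Set (VSp X)) : Set (VSp X) :=
  closure (coneOf P)

/-- A thermodynamical theory: processes have change of condition with total mass
zero (i.e. `P ⊆ V(X)`), and `\hat P` is convex. -/
def IsThermoTheory (P : Set (VSp X)) : Prop :=
  (∀ p ∈ P, p.1 (1 : C(X, ℝ)) = 0) ∧ Convex ℝ (hatP P)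

/-- A Kelvin–Planck theory: a thermodynamical theory with
`\hat P ∩ ({0} × M₊(X)) = {(0,0)}`. -/
def IsKelvinPlanck (P : Set (VSp X)) : Prop :=
  IsThermoTheory P ∧ hatP P ∩ (({0} : Set (Meas X)) ×ˢ PosMeas X) = {(0, 0)}

/-- A Clausius–Duhem pair `(η, T)` for the theory `P`: `η` and `T` are continuous,
`T` is strictly positive, and for every continuous `β` equal pointwise to `1/T`
(such a `β` exists, and is unique, by positivity of `T`), the Clausius–Duhem
inequality `∫ η d(Δm) ≥ ∫ (1/T) dq` holds for every process in `P`. -/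
def IsCDPair (P : Set (VSp X)) (η T : C(X, ℝ)) : Prop :=
  (∀ x, 0 < T x) ∧
    ∀ β : C(X, ℝ), (∀ x, β x = (T x)⁻¹) → ∀ p ∈ P, p.2 β ≤ p.1 η

/-- A Clausius–Duhem temperature scale. -/
def IsCDTemp (P : Set (VSp X)) (T : C(X, ℝ)) : Prop :=
  ∃ η : C(X, ℝ), IsCDPair P η T

/-- Two states are of the same hotness: both `(0, δ_a − δ_b)` and `(0, δ_b − δ_a)`
belong to `\hat P`. -/
def SameHotness (P : Set (VSp X)) (a b : X) : Prop :=
  ((0 : Meas X), dirac a - dirac b) ∈ hatP P ∧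
    ((0 : Meas X), dirac b - dirac a) ∈ hatP P

/-- The hotness level of a state. -/
def hotnessLevel (P : Set (VSp X)) (a : X) : Set X :=
  {b | SameHotness P a b}

/-- A subset of the state space that is a hotness level. -/
def IsHotnessLevel (P : Set (VSp X)) (h : Set X) : Prop :=
  ∃ a : X, h = hotnessLevel P a

/-- The (signed) measure `μ` is supported in the set `A`: `μ` annihilates every
continuous function vanishing on `A`. -/
def SuppIn (μ : Meas X) (A : Set X) : Prop :=
  ∀ f : C(X, ℝ), (∀ x ∈ A, f x = 0) → μ f = 0

/-- `\hat Q` contains a passive heat transfer from hotness level `h` to `h'`: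
an element `(0, μ − μ')` of `\hat Q` with `μ, μ'` nonnegative, `supp μ ⊆ h`,
`supp μ' ⊆ h'` and `μ(h) = μ'(h') > 0` (the common value being the total mass). -/
def IsPassiveHT (Q : Set (VSp X)) (h h' : Set X) : Prop :=
  ∃ μ μ' : Meas X, μ ∈ PosMeas X ∧ μ' ∈ PosMeas X ∧ SuppIn μ h ∧ SuppIn μ' h' ∧
    μ (1 : C(X, ℝ)) = μ' (1 : C(X, ℝ)) ∧ 0 < μ (1 : C(X, ℝ)) ∧
    ((0 : Meas X), μ - μ') ∈ hatP Q

/-- Hotness level `h'` is hotter than `h`: the levels are distinct and every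
thermodynamical theory whose closed process cone contains `P` together with a
passive heat transfer from `h` to `h'` fails to be a Kelvin–Planck theory. -/
def Hotter (P : Set (VSp X)) (h' h : Set X) : Prop :=
  h' ≠ h ∧ ∀ Pd : Set (VSp X), IsThermoTheory Pd → P ⊆ hatP Pd →
    IsPassiveHT Pd h h' → ¬ IsKelvinPlanck Pd

/-- State `a` is hotter than state `b`. -/
def HotterState (P : Set (VSp X)) (a b : X) : Prop :=
  Hotter P (hotnessLevel P a) (hotnessLevel P b)

/-- A Carnot element of the theory `P` operating between hotness levels `h'` and
`h`: a reversible cyclic element `(0, μ' − μ)` with `μ', μ` nonzero nonnegative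
measures supported in `h'`, `h` respectively. -/
def IsCarnotBetween (P : Set (VSp X)) (h' h : Set X) (p : VSp X) : Prop :=
  p ∈ hatP P ∧ -p ∈ hatP P ∧
    ∃ μ' μ : Meas X, μ' ∈ PosMeas X ∧ μ ∈ PosMeas X ∧ μ' ≠ 0 ∧ μ ≠ 0 ∧
      SuppIn μ' h' ∧ SuppIn μ h ∧ p = ((0 : Meas X), μ' - μ)

end

/-!
Since `Meas X` carries the weak-star topology, the continuous functionals on `VSp X` are the
pairs `(η, γ)` of continuous functions, so Hahn–Banach separation in `VSp X` produces
Clausius–Duhem pairs. Separating `\hat P` from the compact convex set of heat absorptions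
`(0, π)`, `π` a probability measure, shows that Kelvin–Planck theories have Clausius–Duhem pairs.
Separating it from the convex join of `(0, q)` with those absorptions shows that `(0, q) ∈ \hat P`
as soon as `∫ (1/T) dq = 0` for every Clausius–Duhem pair `(η, T)`: any other point of the join
lying in `\hat P` would violate the Clausius–Duhem inequality.

A Carnot element `(0, c' δ_a - c δ_b)` and its negative force `c' / T a = c / T b` for every
temperature scale `T`, so all scales are proportional on `X₀`. Conversely, if they are
proportional to `T₀` on `X₀`, then `(0, T₀ a δ_a - T₀ b δ_b)` and its negative are annihilated
by every `1/T`, hence lie in `\hat P`.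
-/

namespace WeakDual

variable {𝕜 E : Type*} [CommRing 𝕜] [TopologicalSpace 𝕜] [IsTopologicalRing 𝕜]
  [AddCommGroup E] [Module 𝕜 E] [TopologicalSpace E] (μ ν : WeakDual 𝕜 E) (e : E)

@[simp] theorem zero_apply : (0 : WeakDual 𝕜 E) e = 0 := rfl
@[simp] theorem add_apply : (μ + ν) e = μ e + ν e := rfl
@[simp] theorem neg_apply : (-μ) e = -μ e := rfl
@[simp] theorem sub_apply : (μ - ν) e = μ e - ν e := rfl
@[simp] theorem smul_apply (c : 𝕜) : (c • μ) e = c * μ e := rfl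

end WeakDual

instance WeakDual.instLocallyConvexSpace {E : Type*} [AddCommGroup E] [Module ℝ E]
    [TopologicalSpace E] : LocallyConvexSpace ℝ (WeakDual ℝ E) :=
  WeakBilin.locallyConvexSpace

theorem WeakDual.exists_eq_apply {𝕜 E : Type*} [NontriviallyNormedField 𝕜] [AddCommGroup E]
    [Module 𝕜 E] [TopologicalSpace E] (φ : StrongDual 𝕜 (WeakDual 𝕜 E)) :
    ∃ e : E, ∀ μ : WeakDual 𝕜 E, φ μ = μ e := by
  obtain ⟨e, he⟩ := LinearMap.dualEmbedding_surjective (topDualPairing 𝕜 E) φ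
  exact ⟨e, fun μ => by rw [← he]; rfl⟩

theorem WeakDual.exists_eq_apply_fst_add_apply_snd {𝕜 E F : Type*} [NontriviallyNormedField 𝕜]
    [AddCommGroup E] [Module 𝕜 E] [TopologicalSpace E]
    [AddCommGroup F] [Module 𝕜 F] [TopologicalSpace F]
    (φ : StrongDual 𝕜 (WeakDual 𝕜 E × WeakDual 𝕜 F)) :
    ∃ (e : E) (f : F), ∀ p : WeakDual 𝕜 E × WeakDual 𝕜 F, φ p = p.1 e + p.2 f := by
  obtain ⟨e, he⟩ := exists_eq_apply (φ.comp (.inl 𝕜 _ _))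
  obtain ⟨f, hf⟩ := exists_eq_apply (φ.comp (.inr 𝕜 _ _))
  exact ⟨e, f, fun p => by rw [← φ.comp_inl_add_comp_inr, ← he, ← hf]⟩

theorem IsCompact.convexJoin {E : Type*} [AddCommGroup E] [Module ℝ E] [TopologicalSpace E]
    [ContinuousAdd E] [ContinuousSMul ℝ E] {s t : Set E} (hs : IsCompact s) (ht : IsCompact t) :
    IsCompact (_root_.convexJoin ℝ s t) := by
  have : _root_.convexJoin ℝ s t =
      (fun q : (E × E) × ℝ => (1 - q.2) • q.1.1 + q.2 • q.1.2) '' ((s ×ˢ t) ×ˢ Icc 0 1) := by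
    ext z
    simp only [mem_convexJoin, segment_eq_image, mem_image, Prod.exists, mem_prod]
    aesop
  rw [this]
  exact ((hs.prod ht).prod isCompact_Icc).image (by fun_prop)

section

variable {X : Type*} [TopologicalSpace X]

@[simp]
theorem dirac_apply (x : X) (f : C(X, ℝ)) : dirac x f = f x := rfl

section PosMeas

variable {μ : Meas X}

theorem apply_le_apply_of_mem_posMeas (hμ : μ ∈ PosMeas X) {f g : C(X, ℝ)}
    (hfg : ∀ x, f x ≤ g x) : μ f ≤ μ g := by
  have := hμ (g - f) fun x => sub_nonneg.2 (hfg x)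
  rw [map_sub] at this
  linarith

theorem abs_apply_le_of_mem_posMeas [CompactSpace X] (hμ : μ ∈ PosMeas X) (g : C(X, ℝ)) :
    |μ g| ≤ ‖g‖ * μ 1 := by
  have hle : ∀ f : C(X, ℝ), μ f ≤ ‖f‖ * μ 1 := fun f => by
    have := apply_le_apply_of_mem_posMeas hμ (g := ‖f‖ • 1) fun x =>
      by simpa using (le_abs_self (f x)).trans (f.norm_coe_le_norm x)
    rwa [map_smul, smul_eq_mul] at this
  have := hle (-g)
  rw [map_neg, norm_neg] at this
  exact abs_le.2 ⟨by linarith, hle g⟩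

theorem isClosed_posMeas : IsClosed (PosMeas X) := by
  simp only [PosMeas, ofPred_forall]
  exact isClosed_iInter fun f => isClosed_iInter fun _ =>
    isClosed_le continuous_const (WeakDual.eval_continuous f)

theorem convex_posMeas : Convex ℝ (PosMeas X) := by
  intro μ hμ ν hν a b ha hb _ f hf
  rw [WeakDual.add_apply, WeakDual.smul_apply, WeakDual.smul_apply]
  exact add_nonneg (mul_nonneg ha (hμ f hf)) (mul_nonneg hb (hν f hf))

end PosMeas

def ProbMeas (X : Type*) [TopologicalSpace X] : Set (Meas X) :=
  PosMeas X ∩ {μ | μ 1 = 1}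

theorem dirac_mem_probMeas (x : X) : dirac x ∈ ProbMeas X :=
  ⟨fun _ hf => hf x, rfl⟩

theorem isCompact_probMeas [CompactSpace X] : IsCompact (ProbMeas X) := by
  refine WeakDual.isCompact_of_bounded_of_closed ?_
    (isClosed_posMeas.inter (isClosed_eq (WeakDual.eval_continuous 1) continuous_const))
  refine (WeakDual.isBounded_toStrongDual_preimage_iff_isBounded.2
    (Metric.isBounded_closedBall (x := 0) (r := 1))).subset fun μ ⟨hμ, (hμ1 : μ 1 = 1)⟩ => ?_
  rw [mem_preimage, mem_closedBall_zero_iff]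
  refine ContinuousLinearMap.opNorm_le_bound _ zero_le_one fun g => ?_
  simpa [hμ1] using abs_apply_le_of_mem_posMeas hμ g

theorem convex_probMeas : Convex ℝ (ProbMeas X) := by
  refine convex_posMeas.inter fun μ hμ ν hν a b _ _ hab => ?_
  change a * μ 1 + b * ν 1 = 1
  rw [hμ.out, hν.out, mul_one, mul_one, hab]

theorem apply_pos_of_mem_probMeas [CompactSpace X] {π : Meas X} (hπ : π ∈ ProbMeas X)
    {β : C(X, ℝ)} (hβ : ∀ x, 0 < β x) : 0 < π β := by
  obtain ⟨m, hm, hmβ⟩ := isCompact_univ.exists_forall_le' β.continuous.continuousOn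
    fun x _ => hβ x
  have := apply_le_apply_of_mem_posMeas hπ.1 (f := m • 1) (g := β) fun x => by
    simpa using hmβ x (mem_univ x)
  rw [map_smul, hπ.2, smul_eq_mul, mul_one] at this
  linarith

section HatP

variable {P : Set (VSp X)}

theorem subset_hatP (P : Set (VSp X)) : P ⊆ hatP P := fun p hp =>
  subset_closure ⟨1, zero_le_one, p, hp, (one_smul ℝ p).symm⟩

theorem smul_mem_hatP {c : ℝ} (hc : 0 ≤ c) {p : VSp X} (hp : p ∈ hatP P) : c • p ∈ hatP P := by
  refine closure_mono ?_
    (image_closure_subset_closure_image (continuous_const_smul c) ⟨p, hp, rfl⟩)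
  rintro - ⟨-, ⟨c', hc', q, hq, rfl⟩, rfl⟩
  exact ⟨c * c', mul_nonneg hc hc', q, hq, smul_smul c c' q⟩

theorem hatP_subset {C : Set (VSp X)} (hC : IsClosed C)
    (hsmul : ∀ c : ℝ, 0 ≤ c → ∀ p ∈ C, c • p ∈ C) (hPC : P ⊆ C) : hatP P ⊆ C :=
  closure_minimal (by rintro - ⟨c, hc, p, hp, rfl⟩; exact hsmul c hc p (hPC hp)) hC

theorem nonneg_of_forall_mem_hatP_lt (f : StrongDual ℝ (VSp X)) {w : ℝ}
    (hw : ∀ p ∈ hatP P, w < f p) {p : VSp X} (hp : p ∈ hatP P) : 0 ≤ f p := by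
  have hw0 : w < 0 := by simpa using hw _ (smul_mem_hatP le_rfl hp)
  by_contra! hneg
  have := hw _
    (smul_mem_hatP (c := (w - 1) / f p) (div_nonneg_of_nonpos (by linarith) hneg.le) hp)
  rw [map_smul, smul_eq_mul, div_mul_cancel₀ _ hneg.ne] at this
  linarith

theorem IsKelvinPlanck.zero_mem_hatP (hP : IsKelvinPlanck P) : (0 : VSp X) ∈ hatP P := by
  have h : (0 : VSp X) ∈ ({(0, 0)} : Set (VSp X)) := rfl
  rw [← hP.2] at h
  exact h.1

theorem IsKelvinPlanck.zero_prod_not_mem_hatP (hP : IsKelvinPlanck P) {π : Meas X}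
    (hπ : π ∈ ProbMeas X) : ((0 : Meas X), π) ∉ hatP P := fun hmem => by
  have h : ((0 : Meas X), π) ∈ ({(0, 0)} : Set (VSp X)) := hP.2 ▸ ⟨hmem, rfl, hπ.1⟩
  have h1 : π 1 = 1 := hπ.2
  rw [(Prod.mk.inj h).2] at h1
  exact zero_ne_one h1

end HatP

/-- The Clausius–Duhem inequality written with the reciprocal temperature `β = 1/T` and required on
all of `\hat P`. -/
def IsReciprocalCDPair (P : Set (VSp X)) (η β : C(X, ℝ)) : Prop :=
  (∀ x, 0 < β x) ∧ ∀ p ∈ hatP P, p.2 β ≤ p.1 η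

section ClausiusDuhem

variable {P : Set (VSp X)} {η β T : C(X, ℝ)}

theorem IsCDTemp.pos (hT : IsCDTemp P T) (x : X) : 0 < T x :=
  hT.choose_spec.1 x

theorem IsCDTemp.exists_isReciprocalCDPair (hT : IsCDTemp P T) :
    ∃ η β : C(X, ℝ), IsReciprocalCDPair P η β ∧ ∀ x, β x = (T x)⁻¹ := by
  obtain ⟨η, hpos, hCD⟩ := hT
  let β : C(X, ℝ) := ⟨fun x => (T x)⁻¹, T.continuous.inv₀ fun x => (hpos x).ne'⟩
  refine ⟨η, β, ⟨fun x => inv_pos.2 (hpos x), hatP_subset ?_ ?_ (hCD β fun _ => rfl)⟩,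
    fun _ => rfl⟩
  · exact isClosed_le ((WeakDual.eval_continuous β).comp continuous_snd)
      ((WeakDual.eval_continuous η).comp continuous_fst)
  · intro c hc p hp
    exact mul_le_mul_of_nonneg_left hp hc

theorem IsReciprocalCDPair.exists_isCDTemp (h : IsReciprocalCDPair P η β) :
    ∃ T : C(X, ℝ), IsCDTemp P T ∧ ∀ x, T x = (β x)⁻¹ := by
  let T : C(X, ℝ) := ⟨fun x => (β x)⁻¹, β.continuous.inv₀ fun x => (h.1 x).ne'⟩
  refine ⟨T, ⟨η, fun x => inv_pos.2 (h.1 x), fun β' hβ' p hp => ?_⟩, fun _ => rfl⟩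
  obtain rfl : β' = β := ContinuousMap.ext fun x => by simp [hβ' x, T]
  exact h.2 p (subset_hatP P hp)

theorem IsReciprocalCDPair.apply_eq_zero (h : IsReciprocalCDPair P η β) {q : Meas X}
    (hq : ((0 : Meas X), q) ∈ hatP P) (hnq : -((0 : Meas X), q) ∈ hatP P) : q β = 0 := by
  have h₁ := h.2 _ hq
  have h₂ := h.2 _ hnq
  simp only [Prod.neg_mk, WeakDual.neg_apply, WeakDual.zero_apply, neg_zero] at h₁ h₂
  linarith

theorem IsCDTemp.mul_eq_mul_of_carnot (hT : IsCDTemp P T) {a b : X} {c' c : ℝ}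
    (hq : ((0 : Meas X), c' • dirac a - c • dirac b) ∈ hatP P)
    (hnq : -((0 : Meas X), c' • dirac a - c • dirac b) ∈ hatP P) : c' * T b = c * T a := by
  obtain ⟨η, β, hηβ, hβ⟩ := hT.exists_isReciprocalCDPair
  have h := hηβ.apply_eq_zero hq hnq
  simp only [WeakDual.sub_apply, WeakDual.smul_apply, dirac_apply, hβ] at h
  have ha := (hT.pos a).ne'
  have hb := (hT.pos b).ne'
  field_simp at h
  linarith

end ClausiusDuhem

section KelvinPlanck

variable {P : Set (VSp X)}

theorem IsKelvinPlanck.exists_isReciprocalCDPair_lt (hP : IsKelvinPlanck P) {S : Set (VSp X)}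
    (hSconv : Convex ℝ S) (hScomp : IsCompact S) (hdirac : ∀ x, ((0 : Meas X), dirac x) ∈ S)
    (hdisj : Disjoint S (hatP P)) :
    ∃ η β : C(X, ℝ), IsReciprocalCDPair P η β ∧ ∀ s ∈ S, s.1 η < s.2 β := by
  obtain ⟨f, u, w, hfS, huw, hfP⟩ :=
    geometric_hahn_banach_compact_closed hSconv hScomp hP.1.2 isClosed_closure hdisj
  have hw : w < 0 := by simpa using hfP 0 hP.zero_mem_hatP
  obtain ⟨η, γ, hf⟩ := WeakDual.exists_eq_apply_fst_add_apply_snd f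
  refine ⟨η, -γ, ⟨fun x => ?_, fun p hp => ?_⟩, fun s hs => ?_⟩
  · have := hfS _ (hdirac x)
    simp only [hf, WeakDual.zero_apply, dirac_apply, zero_add] at this
    simp only [ContinuousMap.neg_apply]
    linarith
  · have := nonneg_of_forall_mem_hatP_lt f hfP hp
    rw [hf] at this
    rw [map_neg]
    linarith
  · have := hfS s hs
    rw [hf] at this
    rw [map_neg]
    linarith

variable [CompactSpace X]

theorem IsKelvinPlanck.exists_isReciprocalCDPair (hP : IsKelvinPlanck P) :
    ∃ η β : C(X, ℝ), IsReciprocalCDPair P η β := by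
  obtain ⟨η, β, h, -⟩ := hP.exists_isReciprocalCDPair_lt
    ((convex_singleton 0).prod convex_probMeas) (isCompact_singleton.prod isCompact_probMeas)
    (fun x => ⟨rfl, dirac_mem_probMeas x⟩)
    (disjoint_left.2 fun _ ⟨h0, hπ⟩ hmem => hP.zero_prod_not_mem_hatP hπ (by
      rwa [← mem_singleton_iff.1 h0]))
  exact ⟨η, β, h⟩

theorem IsKelvinPlanck.mem_hatP_of_forall_apply_eq_zero [Nonempty X] (hP : IsKelvinPlanck P)
    {q : Meas X} (hq : ∀ η β, IsReciprocalCDPair P η β → q β = 0) :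
    ((0 : Meas X), q) ∈ hatP P := by
  by_contra hv
  set Δ : Set (VSp X) := {0} ×ˢ ProbMeas X
  have hΔ : ∀ x, ((0 : Meas X), dirac x) ∈ Δ := fun x => ⟨rfl, dirac_mem_probMeas x⟩
  by_cases hdisj : Disjoint (convexJoin ℝ {((0 : Meas X), q)} Δ) (hatP P)
  · obtain ⟨η, β, hηβ, hlt⟩ := hP.exists_isReciprocalCDPair_lt
      ((convex_singleton _).convexJoin ((convex_singleton 0).prod convex_probMeas))
      (isCompact_singleton.convexJoin (isCompact_singleton.prod isCompact_probMeas))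
      (fun x => subset_convexJoin_right (singleton_nonempty _) (hΔ x)) hdisj
    have := hlt _ (subset_convexJoin_left ⟨_, hΔ (Classical.arbitrary X)⟩ rfl)
    simp [hq η β hηβ] at this
  · obtain ⟨z, hzS, hzP⟩ := not_disjoint_iff.1 hdisj
    obtain ⟨_, rfl, ⟨_, π⟩, ⟨rfl, hπ⟩, s, t, hs, ht, hst, rfl⟩ := mem_convexJoin.1 hzS
    obtain ⟨η₀, β₀, h₀⟩ := hP.exists_isReciprocalCDPair
    have key := h₀.2 _ hzP
    simp only [Prod.fst_add, Prod.snd_add, Prod.smul_mk, smul_zero, add_zero, WeakDual.add_apply,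
      WeakDual.smul_apply, WeakDual.zero_apply, hq η₀ β₀ h₀, mul_zero, zero_add] at key
    obtain rfl : t = 0 := by nlinarith [apply_pos_of_mem_probMeas hπ h₀.1]
    obtain rfl : s = 1 := by linarith
    exact hv (by simpa using hzP)

end KelvinPlanck

end

theorem exists_pos_forall_eq_mul_of_mul_eq_mul {ι : Type*} {s : Set ι} {f g : ι → ℝ}
    (hf : ∀ x, 0 < f x) (hg : ∀ x, 0 < g x)
    (h : ∀ x ∈ s, ∀ y ∈ s, x ≠ y → f x * g y = f y * g x) :
    ∃ α : ℝ, 0 < α ∧ ∀ x ∈ s, f x = α * g x := by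
  rcases s.eq_empty_or_nonempty with rfl | ⟨x₀, hx₀⟩
  · exact ⟨1, one_pos, by simp⟩
  refine ⟨f x₀ / g x₀, div_pos (hf x₀) (hg x₀), fun x hx => ?_⟩
  have := (hg x₀).ne'
  rcases eq_or_ne x x₀ with rfl | hne
  · field_simp
  · field_simp
    linarith [h x hx x₀ hx₀ hne]

theorem subdomain_temperature_uniqueness_iff_carnot_general
    {X : Type*} [TopologicalSpace X] [CompactSpace X]
    (P : Set (VSp X)) (hP : IsKelvinPlanck P) (X₀ : Set X) :
    (∃ T₀ : C(X, ℝ), IsCDTemp P T₀ ∧ ∀ T : C(X, ℝ), IsCDTemp P T →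
        ∃ α : ℝ, 0 < α ∧ ∀ x ∈ X₀, T x = α * T₀ x) ↔
      (∀ a ∈ X₀, ∀ b ∈ X₀, a ≠ b → ∃ c' c : ℝ, 0 < c' ∧ 0 < c ∧
        ((0 : Meas X), c' • dirac a - c • dirac b) ∈ hatP P ∧
        -(((0 : Meas X), c' • dirac a - c • dirac b) : VSp X) ∈ hatP P) := by
  constructor
  · rintro ⟨T₀, hT₀, huniq⟩ a ha b hb -
    have : Nonempty X := ⟨a⟩
    have hq : ∀ η β, IsReciprocalCDPair P η β → (T₀ a • dirac a - T₀ b • dirac b) β = 0 := by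
      intro η β hηβ
      obtain ⟨T, hT, hTβ⟩ := hηβ.exists_isCDTemp
      obtain ⟨α, hα, hTα⟩ := huniq T hT
      have hβ : ∀ x ∈ X₀, T₀ x * β x = α⁻¹ := fun x hx => by
        rw [← inv_inv (β x), ← hTβ, hTα x hx]
        field_simp [(hT₀.pos x).ne']
      simp [hβ a ha, hβ b hb]
    refine ⟨T₀ a, T₀ b, hT₀.pos a, hT₀.pos b, hP.mem_hatP_of_forall_apply_eq_zero hq, ?_⟩
    rw [Prod.neg_mk, neg_zero]
    exact hP.mem_hatP_of_forall_apply_eq_zero fun η β h => by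
      rw [WeakDual.neg_apply, hq η β h, neg_zero]
  · intro hcarnot
    obtain ⟨η₀, β₀, h₀⟩ := hP.exists_isReciprocalCDPair
    obtain ⟨T₀, hT₀, -⟩ := h₀.exists_isCDTemp
    refine ⟨T₀, hT₀, fun T hT => exists_pos_forall_eq_mul_of_mul_eq_mul hT.pos hT₀.pos ?_⟩
    intro x hx y hy hxy
    obtain ⟨c', c, hc', -, h, h'⟩ := hcarnot x hx y hy hxy
    have hTc := hT.mul_eq_mul_of_carnot h h'
    have hT₀c := hT₀.mul_eq_mul_of_carnot h h'
    apply mul_left_cancel₀ hc'.ne'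
    linear_combination T x * hT₀c - T₀ x * hTc

/-- **Proposition.** Let `(X, P)` be a Kelvin–Planck theory and `X₀ ⊆ X`.  The
following are equivalent: (i) all restrictions to `X₀` of Clausius–Duhem temperature
scales are positive multiples of some fixed one; (ii) between each pair of distinct
states of `X₀` there is a Carnot element `(0, c'·δ_{σ'} − c·δ_σ)`. -/
theorem subdomain_temperature_uniqueness_iff_carnot
    {X : Type*} [TopologicalSpace X] [CompactSpace X] [T2Space X]
    (P : Set (VSp X)) (hP : IsKelvinPlanck P) (X₀ : Set X) :
    (∃ T₀ : C(X, ℝ), IsCDTemp P T₀ ∧ ∀ T : C(X, ℝ), IsCDTemp P T →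
        ∃ α : ℝ, 0 < α ∧ ∀ x ∈ X₀, T x = α * T₀ x) ↔
      (∀ a ∈ X₀, ∀ b ∈ X₀, a ≠ b → ∃ c' c : ℝ, 0 < c' ∧ 0 < c ∧
        ((0 : Meas X), c' • dirac a - c • dirac b) ∈ hatP P ∧
        -(((0 : Meas X), c' • dirac a - c • dirac b) : VSp X) ∈ hatP P) :=
  subdomain_temperature_uniqueness_iff_carnot_general P hP X₀
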